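/- Let λ ∈ Γ_{k-1}, let G(λ) = σ_k/σ_{k-1} − Σ_{ℓ=0}^{k-2} α_ℓ σ_ℓ/σ_{k-1} with α_ℓ > 0 and set G^{ii} = ∂G/∂λ_i (each nonnegative). Then Σ_i G^{ii}|λ_i| ≥ G(λ) + δ·Σ_{ℓ=0}^{k-2} σ_ℓ/σ_{k-1}, where δ > 0 is any constant with α_ℓ(k−ℓ) ≥ δ for all 0 ≤ ℓ ≤ k−2; here one uses the Euler homogeneity relations Σ_i (σ_k/σ_{k-1})^{ii} λ_i = σ_k/σ_{k-1} and Σ_i (σ_ℓ/σ_{k-1})^{ii} λ_i = −(k−1−ℓ)σ_ℓ/σ_{k-1}. -/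

import Mathlib

/-- The m-th elementary symmetric polynomial of x ∈ ℝⁿ. -/
noncomputable def esymm (n m : ℕ) (x : Fin n → ℝ) : ℝ :=
  ∑ s ∈ Finset.powersetCard m (Finset.univ : Finset (Fin n)), ∏ i ∈ s, x i

/-- The Gårding cone Γ_k = {λ ∈ ℝⁿ : σ_j(λ) > 0 for 1 ≤ j ≤ k}. -/
def Gamma (n k : ℕ) : Set (Fin n → ℝ) :=
  {x | ∀ j : ℕ, 1 ≤ j → j ≤ k → 0 < esymm n j x}

/-!
Write `q_m = σ_m / σ_{k-1}`. Since `G^{ii} ≥ 0`, `Σ G^{ii} |λ_i| ≥ Σ G^{ii} λ_i = DG(λ) λ`, and by the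
Euler relations `DG(λ) λ = q_k + Σ_ℓ α_ℓ (k-1-ℓ) q_ℓ`. Subtracting `G(λ) = q_k - Σ_ℓ α_ℓ q_ℓ` leaves
`Σ_ℓ α_ℓ (k-ℓ) q_ℓ ≥ δ Σ_ℓ q_ℓ`, because every `q_ℓ` with `ℓ ≤ k-1` is positive on `Γ_{k-1}`.
-/

open Finset

lemma differentiable_esymm (n m : ℕ) : Differentiable ℝ (esymm n m) := by
  unfold esymm
  fun_prop

lemma esymm_zero (n : ℕ) (x : Fin n → ℝ) : esymm n 0 x = 1 := by
  simp [esymm]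

lemma esymm_pos_of_mem_Gamma {n k j : ℕ} {x : Fin n → ℝ} (hx : x ∈ Gamma n k) (hj : j ≤ k) :
    0 < esymm n j x := by
  rcases Nat.eq_zero_or_pos j with rfl | hj0
  · rw [esymm_zero]; exact one_pos
  · exact hx j hj0 hj

lemma differentiableAt_esymm_div_of_mem_Gamma {n k : ℕ} {x : Fin n → ℝ} (hx : x ∈ Gamma n k)
    (j : ℕ) : DifferentiableAt ℝ (fun y => esymm n j y / esymm n k y) x :=
  (differentiable_esymm n j x).mul
    ((differentiable_esymm n k x).inv (esymm_pos_of_mem_Gamma hx le_rfl).ne')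

lemma esymm_div_nonneg_of_mem_Gamma {n k j : ℕ} {x : Fin n → ℝ} (hx : x ∈ Gamma n k)
    (hj : j ≤ k) : 0 ≤ esymm n j x / esymm n k x :=
  div_nonneg (esymm_pos_of_mem_Gamma hx hj).le (esymm_pos_of_mem_Gamma hx le_rfl).le

lemma ContinuousLinearMap.sum_apply_single_mul {ι R : Type*} [Fintype ι] [DecidableEq ι]
    [CommSemiring R] [TopologicalSpace R] (L : (ι → R) →L[R] R) (x : ι → R) : ∑ i, L (Pi.single i 1) * x i = L x := by
  conv_rhs => rw [pi_eq_sum_univ' x, map_sum]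
  simp only [map_smul, smul_eq_mul, mul_comm]

lemma fderiv_sub_sum_const_mul_apply {E ι : Type*} [NormedAddCommGroup E] [NormedSpace ℝ E]
    {f : E → ℝ} {g : ι → E → ℝ} {x : E} {s : Finset ι} (c : ι → ℝ)
    (hf : DifferentiableAt ℝ f x) (hg : ∀ ℓ ∈ s, DifferentiableAt ℝ (g ℓ) x) (v : E) :
    fderiv ℝ (fun y => f y - ∑ ℓ ∈ s, c ℓ * g ℓ y) x v
      = fderiv ℝ f x v - ∑ ℓ ∈ s, c ℓ * fderiv ℝ (g ℓ) x v := by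
  have hcg : ∀ ℓ ∈ s, DifferentiableAt ℝ (fun y => c ℓ * g ℓ y) x :=
    fun ℓ hℓ => (hg ℓ hℓ).const_mul (c ℓ)
  rw [fderiv_fun_sub hf (DifferentiableAt.fun_sum hcg), fderiv_fun_sum hcg]
  simp only [sub_apply, _root_.sum_apply]
  congr 1
  refine sum_congr rfl fun ℓ hℓ => ?_
  rw [fderiv_const_mul (hg ℓ hℓ), smul_apply, smul_eq_mul]

theorem stmt_17_general (n k : ℕ) (α : ℕ → ℝ) (δ : ℝ)
    (hδα : ∀ ℓ, ℓ ≤ k - 2 → δ ≤ α ℓ * ((k:ℝ) - (ℓ:ℝ)))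
    (x : Fin n → ℝ) (hx : x ∈ Gamma n (k-1))
    (G : (Fin n → ℝ) → ℝ)
    (hG : G = fun y => esymm n k y / esymm n (k-1) y
      - ∑ ℓ ∈ Finset.range (k-1), α ℓ * (esymm n ℓ y / esymm n (k-1) y))
    (hGii : ∀ i : Fin n, 0 ≤ fderiv ℝ G x (Pi.single i 1))
    (hEulerK : ∑ i : Fin n,
        fderiv ℝ (fun y => esymm n k y / esymm n (k-1) y) x (Pi.single i 1) * x i
      = esymm n k x / esymm n (k-1) x)
    (hEulerL : ∀ ℓ : ℕ, ℓ ≤ k - 2 →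
      ∑ i : Fin n,
          fderiv ℝ (fun y => esymm n ℓ y / esymm n (k-1) y) x (Pi.single i 1) * x i
        = -((k:ℝ)-1-(ℓ:ℝ)) * (esymm n ℓ x / esymm n (k-1) x)) :
    G x + δ * ∑ ℓ ∈ Finset.range (k-1), esymm n ℓ x / esymm n (k-1) x
      ≤ ∑ i : Fin n, fderiv ℝ G x (Pi.single i 1) * |x i| := by
  set q : ℕ → (Fin n → ℝ) → ℝ := fun m y => esymm n m y / esymm n (k-1) y
  have hle : ∀ ℓ ∈ range (k-1), ℓ ≤ k - 2 := fun ℓ hℓ => by rw [mem_range] at hℓ; omega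
  have hEuler : fderiv ℝ G x x = q k x + ∑ ℓ ∈ range (k-1), α ℓ * ((k:ℝ)-1-ℓ) * q ℓ x := by
    rw [hG, fderiv_sub_sum_const_mul_apply α (differentiableAt_esymm_div_of_mem_Gamma hx k)
      (fun ℓ _ => differentiableAt_esymm_div_of_mem_Gamma hx ℓ),
      ← ContinuousLinearMap.sum_apply_single_mul, hEulerK, sub_eq_add_neg, ← sum_neg_distrib]
    refine congrArg _ (sum_congr rfl fun ℓ hℓ => ?_)
    rw [← ContinuousLinearMap.sum_apply_single_mul, hEulerL ℓ (hle ℓ hℓ)]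
    ring
  have hδ_sum : δ * ∑ ℓ ∈ range (k-1), q ℓ x ≤ ∑ ℓ ∈ range (k-1), α ℓ * ((k:ℝ) - ℓ) * q ℓ x := by
    rw [mul_sum]
    exact sum_le_sum fun ℓ hℓ => mul_le_mul_of_nonneg_right (hδα ℓ (hle ℓ hℓ))
      (esymm_div_nonneg_of_mem_Gamma hx (mem_range_le hℓ))
  calc G x + δ * ∑ ℓ ∈ range (k-1), q ℓ x
      ≤ q k x + ∑ ℓ ∈ range (k-1), α ℓ * ((k:ℝ)-1-ℓ) * q ℓ x := by
        have hsplit : ∑ ℓ ∈ range (k-1), α ℓ * ((k:ℝ) - ℓ) * q ℓ x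
            = ∑ ℓ ∈ range (k-1), α ℓ * q ℓ x
              + ∑ ℓ ∈ range (k-1), α ℓ * ((k:ℝ)-1-ℓ) * q ℓ x := by
          rw [← sum_add_distrib]; exact sum_congr rfl fun ℓ _ => by ring
        rw [hG]
        linarith
    _ = ∑ i, fderiv ℝ G x (Pi.single i 1) * x i :=
        (hEuler ▸ ContinuousLinearMap.sum_apply_single_mul _ x).symm
    _ ≤ ∑ i, fderiv ℝ G x (Pi.single i 1) * |x i| :=
        sum_le_sum fun i _ => mul_le_mul_of_nonneg_left (le_abs_self _) (hGii i)

/-- for λ ∈ Γ_{k-1}, G = σ_k/σ_{k-1} − Σ α_ℓ σ_ℓ/σ_{k-1} with α_ℓ > 0,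
G^{ii} = ∂G/∂λ_i nonnegative, and the Euler homogeneity relations as hypotheses,
one has Σ_i G^{ii}|λ_i| ≥ G(λ) + δ·Σ_ℓ σ_ℓ/σ_{k-1} whenever α_ℓ(k−ℓ) ≥ δ > 0. -/
theorem stmt_17 (n k : ℕ) (hk : 2 ≤ k) (hkn : k ≤ n) (α : ℕ → ℝ)
    (hα : ∀ ℓ, ℓ ≤ k - 2 → 0 < α ℓ) (δ : ℝ) (hδ : 0 < δ)
    (hδα : ∀ ℓ, ℓ ≤ k - 2 → δ ≤ α ℓ * ((k:ℝ) - (ℓ:ℝ)))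
    (x : Fin n → ℝ) (hx : x ∈ Gamma n (k-1))
    (G : (Fin n → ℝ) → ℝ)
    (hG : G = fun y => esymm n k y / esymm n (k-1) y
      - ∑ ℓ ∈ Finset.range (k-1), α ℓ * (esymm n ℓ y / esymm n (k-1) y))
    (hGii : ∀ i : Fin n, 0 ≤ fderiv ℝ G x (Pi.single i 1))
    (hEulerK : ∑ i : Fin n,
        fderiv ℝ (fun y => esymm n k y / esymm n (k-1) y) x (Pi.single i 1) * x i
      = esymm n k x / esymm n (k-1) x)
    (hEulerL : ∀ ℓ : ℕ, ℓ ≤ k - 2 →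
      ∑ i : Fin n,
          fderiv ℝ (fun y => esymm n ℓ y / esymm n (k-1) y) x (Pi.single i 1) * x i
        = -((k:ℝ)-1-(ℓ:ℝ)) * (esymm n ℓ x / esymm n (k-1) x)) :
    G x + δ * ∑ ℓ ∈ Finset.range (k-1), esymm n ℓ x / esymm n (k-1) x
      ≤ ∑ i : Fin n, fderiv ℝ G x (Pi.single i 1) * |x i| :=
  stmt_17_general n k α δ hδα x hx G hG hGii hEulerK hEulerL
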